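/- arXiv:2504.04183 — 2 statements merged into one kernel-verified Lean document; each statement's English description precedes it below -/
import Mathlib

section
/- Let (U_1 | ⋯ | U_p) be an ordered partition of [m] and I ⊆ [m]. Then F(U_1 | ⋯ | U_p) ∩ D_I ≠ ∅ if and only if I ⊆ U_j for some j ∈ {1, …, p}. -/
/-- The vertex of the permutohedron corresponding to a permutation `σ` of `[m]`:
the point `(σ(1), …, σ(m))` (in 0-based coordinates, `i ↦ σ(i) + 1`). -/
def permVertex (m : ℕ) (σ : Equiv.Perm (Fin m)) : Fin m → ℝ :=
  fun i => ((σ i : ℕ) : ℝ) + 1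

/-- The permutohedron `Perm^{m-1} ⊂ ℝ^m`: the convex hull of the points
`(σ(1), …, σ(m))` over all permutations `σ` of `[m]`. -/
def permutohedron (m : ℕ) : Set (Fin m → ℝ) :=
  convexHull ℝ {x | ∃ σ : Equiv.Perm (Fin m), x = permVertex m σ}

/-- An ordered partition `(U_1 | ⋯ | U_p)` of `[m]`: a tuple (list) of pairwise
disjoint nonempty subsets of `[m]` whose union is `[m]`. -/
def IsOrderedPartition (m : ℕ) (L : List (Finset (Fin m))) : Prop :=
  (∀ U ∈ L, U.Nonempty) ∧ L.Pairwise Disjoint ∧ L.foldr (· ∪ ·) ∅ = Finset.univ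

/-- `|U_1| + ⋯ + |U_j|`, the sum of the cardinalities of the first `j` parts. -/
def partialCard (m : ℕ) (L : List (Finset (Fin m))) (j : ℕ) : ℕ :=
  ((L.take j).map Finset.card).sum

/-- A permutation `σ` is compatible with the ordered partition `(U_1 | ⋯ | U_p)` if
for every `j` it maps `U_j` bijectively onto
`{|U_1| + ⋯ + |U_{j-1}| + 1, …, |U_1| + ⋯ + |U_j|}` (here in 0-based form). -/
def Compatible (m : ℕ) (L : List (Finset (Fin m))) (σ : Equiv.Perm (Fin m)) : Prop :=
  ∀ j : Fin L.length, ∀ i : Fin m,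
    i ∈ L.get j ↔ partialCard m L j ≤ (σ i : ℕ) ∧ (σ i : ℕ) < partialCard m L (j + 1)

/-- The face `F(U_1 | ⋯ | U_p)` of the permutohedron: the convex hull of the vertices
corresponding to permutations compatible with the ordered partition. -/
def permFace (m : ℕ) (L : List (Finset (Fin m))) : Set (Fin m → ℝ) :=
  convexHull ℝ {x | ∃ σ : Equiv.Perm (Fin m), Compatible m L σ ∧ x = permVertex m σ}

/-- The diagonal subspace `D_I = {x : x_i = x_j for all i, j ∈ I}`. -/
def diagSubspace (m : ℕ) (I : Finset (Fin m)) : Set (Fin m → ℝ) :=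
  {x | ∀ i ∈ I, ∀ j ∈ I, x i = x j}

/-!
On every vertex of `F(U_1 | ⋯ | U_p)` the coordinates indexed by an earlier block are smaller
than those indexed by a later one; this strict inequality survives convex combinations, so a
point of the face lying in `D_I` forces `I` into a single block.
Conversely, if `I ⊆ U_j`, right multiplication by a transposition of two elements of `U_j`
permutes the compatible permutations, so the barycenter of the vertices of the face has equal
coordinates on `I`.
-/

theorem List.exists_mem_getElem_flatten {α : Type*} (L : List (List α)) {k : ℕ}
    (hk : k < L.flatten.length) :
    ∃ (j : ℕ) (hj : j < L.length), L.flatten[k] ∈ L[j] ∧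
      ((L.take j).map length).sum ≤ k ∧ k < ((L.take (j + 1)).map length).sum := by
  induction L generalizing k with
  | nil => simp at hk
  | cons l L ih =>
    by_cases hkl : k < l.length
    · exact ⟨0, by simp, by simp [List.getElem_append_left hkl, hkl]⟩
    · obtain ⟨j, hj, hmem, hlo, hhi⟩ :=
        ih (k := k - l.length) (by simp [List.length_flatten] at hk ⊢; omega)
      refine ⟨j + 1, by simpa, ?_, ?_, ?_⟩
      · simpa [List.getElem_append_right (Nat.le_of_not_lt hkl)] using hmem
      · simp only [List.take_succ_cons, List.map_cons, List.sum_cons]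
        omega
      · simp only [List.take_succ_cons, List.map_cons, List.sum_cons]
        omega

theorem List.Pairwise.disjoint_get {α : Type*} [PartialOrder α] [OrderBot α] {L : List α}
    (hd : L.Pairwise _root_.Disjoint) {a b : Fin L.length} (hab : a ≠ b) :
    _root_.Disjoint (L.get a) (L.get b) := by
  rcases lt_or_gt_of_ne hab with h | h
  · exact hd.rel_get_of_lt h
  · exact (hd.rel_get_of_lt h).symm

theorem Finset.mem_foldr_union {α : Type*} [DecidableEq α] {L : List (Finset α)} {a : α} :
    a ∈ L.foldr (· ∪ ·) ∅ ↔ ∃ U ∈ L, a ∈ U := by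
  induction L with
  | nil => simp
  | cons U T ih => simp [ih]

theorem Finset.exists_mem_get_of_foldr_union_eq_univ {α : Type*} [DecidableEq α] [Fintype α]
    {L : List (Finset α)} (hcov : L.foldr (· ∪ ·) ∅ = Finset.univ) (a : α) :
    ∃ j, a ∈ L.get j := by
  obtain ⟨U, hU, ha⟩ := Finset.mem_foldr_union.1 (hcov ▸ Finset.mem_univ a)
  obtain ⟨j, rfl⟩ := List.mem_iff_get.1 hU
  exact ⟨j, ha⟩

section

variable {m : ℕ} {L : List (Finset (Fin m))}

lemma partialCard_mono (L : List (Finset (Fin m))) : Monotone (partialCard m L) := by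
  intro a b hab
  obtain ⟨c, rfl⟩ := Nat.exists_eq_add_of_le hab
  simp only [partialCard, List.take_add, List.map_append, List.sum_append]
  exact Nat.le_add_right _ _

lemma Compatible.lt_of_lt {σ : Equiv.Perm (Fin m)} (hσ : Compatible m L σ)
    {a b : Fin L.length} {i₁ i₂ : Fin m} (h₁ : i₁ ∈ L.get a) (h₂ : i₂ ∈ L.get b)
    (hab : a < b) : σ i₁ < σ i₂ := by
  have := partialCard_mono L (show (a : ℕ) + 1 ≤ b from hab)
  have := (hσ a i₁).1 h₁
  have := (hσ b i₂).1 h₂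
  rw [Fin.lt_def]
  omega

lemma le_of_partialCard_le_of_lt_partialCard {j j' k : ℕ} (hlo : partialCard m L j ≤ k)
    (hhi : k < partialCard m L (j' + 1)) : j ≤ j' := by
  by_contra! h
  have := partialCard_mono L (show j' + 1 ≤ j from h)
  omega

lemma compatible_of_forall_exists (hd : L.Pairwise Disjoint) {σ : Equiv.Perm (Fin m)}
    (h : ∀ i, ∃ j : Fin L.length, i ∈ L.get j ∧
      partialCard m L j ≤ σ i ∧ (σ i : ℕ) < partialCard m L (j + 1)) :
    Compatible m L σ := by
  intro j i
  obtain ⟨j', hij', hlo', hhi'⟩ := h i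
  constructor
  · intro hij
    obtain rfl : j = j' := by
      by_contra hne
      exact (hd.disjoint_get hne).notMem_of_mem_left_finset hij hij'
    exact ⟨hlo', hhi'⟩
  · rintro ⟨hlo, hhi⟩
    obtain rfl : j = j' := Fin.ext <| le_antisymm
      (le_of_partialCard_le_of_lt_partialCard hlo hhi')
      (le_of_partialCard_le_of_lt_partialCard hlo' hhi)
    exact hij'

-- `σ` sends `i` to its position in the concatenation of the sorted blocks `U_1, …, U_p`.
lemma exists_compatible (hd : L.Pairwise Disjoint) (hcov : L.foldr (· ∪ ·) ∅ = Finset.univ) :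
    ∃ σ : Equiv.Perm (Fin m), Compatible m L σ := by
  set l := (L.map fun U => U.sort (· ≤ ·)).flatten
  have hnd : l.Nodup := by
    refine List.nodup_flatten.2 ⟨by simp [Finset.sort_nodup], List.pairwise_map.2 ?_⟩
    refine hd.imp fun hUV => ?_
    simpa [List.disjoint_left, Finset.disjoint_left] using hUV
  have hall : ∀ i, i ∈ l := by
    intro i
    obtain ⟨j, hj⟩ := Finset.exists_mem_get_of_foldr_union_eq_univ hcov i
    simp only [l, List.mem_flatten, List.mem_map]
    exact ⟨_, ⟨_, List.get_mem L j, rfl⟩, (Finset.mem_sort _).2 hj⟩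
  let e := List.Nodup.getEquivOfForallMemList l hnd hall
  have hlen : l.length = m := by simpa using Fintype.card_congr e
  refine ⟨e.symm.trans (finCongr hlen), compatible_of_forall_exists hd fun i => ?_⟩
  obtain ⟨j, hj, hmem, hlo, hhi⟩ := List.exists_mem_getElem_flatten _ (e.symm i).isLt
  have hlengths (n : ℕ) :
      (((L.map fun U => U.sort (· ≤ ·)).take n).map List.length).sum = partialCard m L n := by
    simp [partialCard, ← List.map_take, Function.comp_def]
  have hi : l[(e.symm i : ℕ)] = i := e.apply_symm_apply i
  rw [hlengths] at hlo hhi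
  refine ⟨⟨j, by simpa using hj⟩, ?_, hlo, hhi⟩
  rw [List.get_eq_getElem, ← hi]
  simpa using hmem

lemma swap_mem_get_iff (hd : L.Pairwise Disjoint) {j j' : Fin L.length} {i₁ i₂ : Fin m}
    (h₁ : i₁ ∈ L.get j) (h₂ : i₂ ∈ L.get j) (i : Fin m) :
    Equiv.swap i₁ i₂ i ∈ L.get j' ↔ i ∈ L.get j' := by
  have h₁₂ : i₁ ∈ L.get j' ↔ i₂ ∈ L.get j' := by
    rcases eq_or_ne j j' with rfl | hne
    · exact iff_of_true h₁ h₂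
    · exact iff_of_false ((hd.disjoint_get hne).notMem_of_mem_left_finset h₁)
        ((hd.disjoint_get hne).notMem_of_mem_left_finset h₂)
  rw [Equiv.swap_apply_def]
  split_ifs with hi₁ hi₂
  · rw [hi₁, h₁₂]
  · rw [hi₂, h₁₂]
  · rfl

lemma Compatible.mul_swap (hd : L.Pairwise Disjoint) {j : Fin L.length} {i₁ i₂ : Fin m}
    (h₁ : i₁ ∈ L.get j) (h₂ : i₂ ∈ L.get j) {σ : Equiv.Perm (Fin m)}
    (hσ : Compatible m L σ) :
    Compatible m L (σ * Equiv.swap i₁ i₂) := fun j' i => by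
  rw [← swap_mem_get_iff hd h₁ h₂ i]
  exact hσ j' _

lemma compatible_mul_swap_iff (hd : L.Pairwise Disjoint) {j : Fin L.length} {i₁ i₂ : Fin m}
    (h₁ : i₁ ∈ L.get j) (h₂ : i₂ ∈ L.get j) {σ : Equiv.Perm (Fin m)} :
    Compatible m L (σ * Equiv.swap i₁ i₂) ↔ Compatible m L σ := by
  refine ⟨fun hσ => ?_, Compatible.mul_swap hd h₁ h₂⟩
  simpa [mul_assoc] using hσ.mul_swap hd h₁ h₂

lemma apply_lt_apply_of_mem_permFace {a b : Fin L.length} {i₁ i₂ : Fin m}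
    (h₁ : i₁ ∈ L.get a) (h₂ : i₂ ∈ L.get b) (hab : a < b) {x : Fin m → ℝ}
    (hx : x ∈ permFace m L) : x i₁ < x i₂ := by
  have hconv : Convex ℝ {y : Fin m → ℝ | y i₁ - y i₂ < 0} :=
    convex_halfSpace_lt ⟨fun y z => by simp only [Pi.add_apply]; ring,
      fun c y => by simp only [Pi.smul_apply, smul_eq_mul]; ring⟩ 0
  have hsub :
      {y | ∃ σ, Compatible m L σ ∧ y = permVertex m σ} ⊆ {y | y i₁ - y i₂ < 0} := by
    rintro _ ⟨σ, hσ, rfl⟩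
    simpa [permVertex] using hσ.lt_of_lt h₁ h₂ hab
  simpa using convexHull_min hsub hconv hx

lemma apply_ne_apply_of_mem_permFace {a b : Fin L.length} {i₁ i₂ : Fin m}
    (h₁ : i₁ ∈ L.get a) (h₂ : i₂ ∈ L.get b) (hab : a ≠ b) {x : Fin m → ℝ}
    (hx : x ∈ permFace m L) : x i₁ ≠ x i₂ := by
  rcases lt_or_gt_of_ne hab with h | h
  · exact (apply_lt_apply_of_mem_permFace h₁ h₂ h hx).ne
  · exact (apply_lt_apply_of_mem_permFace h₂ h₁ h hx).ne'

lemma permFace_inter_diagSubspace_nonempty (hd : L.Pairwise Disjoint)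
    (hcov : L.foldr (· ∪ ·) ∅ = Finset.univ) {I : Finset (Fin m)} {j : Fin L.length}
    (hI : I ⊆ L.get j) : (permFace m L ∩ diagSubspace m I).Nonempty := by
  classical
  obtain ⟨σ₀, hσ₀⟩ := exists_compatible hd hcov
  set S := Finset.univ.filter (Compatible m L)
  have hS : (0 : ℝ) < ∑ _σ ∈ S, 1 := by
    simpa using Finset.card_pos.2 ⟨σ₀, by simpa [S] using hσ₀⟩
  refine ⟨S.centerMass (fun _ => 1) (permVertex m),
    S.centerMass_mem_convexHull (fun _ _ => zero_le_one) hS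
      fun σ hσ => ⟨σ, by simpa [S] using hσ, rfl⟩,
    fun i₁ hi₁ i₂ hi₂ => ?_⟩
  have hsum : ∑ σ ∈ S, permVertex m σ i₁ = ∑ σ ∈ S, permVertex m σ i₂ :=
    Finset.sum_equiv (Equiv.mulRight (Equiv.swap i₁ i₂))
      (fun σ => by simp [S, compatible_mul_swap_iff hd (hI hi₁) (hI hi₂)])
      (fun σ _ => by simp [permVertex])
  simp [Finset.centerMass, hsum]

end

theorem stmt7 (m : ℕ) (hm : 1 ≤ m) (L : List (Finset (Fin m)))
    (hL : IsOrderedPartition m L) (I : Finset (Fin m)) :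
    (permFace m L ∩ diagSubspace m I).Nonempty ↔
      ∃ j : Fin L.length, I ⊆ L.get j := by
  obtain ⟨-, hd, hcov⟩ := hL
  have hblock := Finset.exists_mem_get_of_foldr_union_eq_univ hcov
  constructor
  · rintro ⟨x, hxF, hxD⟩
    by_contra! hI
    obtain ⟨a, -⟩ := hblock ⟨0, hm⟩
    obtain ⟨i₁, hi₁I, -⟩ := Finset.not_subset.1 (hI a)
    obtain ⟨b, hi₁b⟩ := hblock i₁
    obtain ⟨i₂, hi₂I, hi₂b⟩ := Finset.not_subset.1 (hI b)
    obtain ⟨c, hi₂c⟩ := hblock i₂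
    exact apply_ne_apply_of_mem_permFace hi₁b hi₂c (by rintro rfl; exact hi₂b hi₂c) hxF
      (hxD i₁ hi₁I i₂ hi₂I)
  · rintro ⟨j, hI⟩
    exact permFace_inter_diagSubspace_nonempty hd hcov hI
end

section
/- For every subset I ⊆ [m], the intersection D_I ∩ Perm^{m−1} equals the convex hull of the set of barycenters { b(U_1 | ⋯ | U_p) : (U_1 | ⋯ | U_p) an ordered partition of [m] such that I ⊆ U_j for some j }. -/
/-- The set of permutations compatible with an ordered partition. -/
noncomputable def compatPerms (m : ℕ) (L : List (Finset (Fin m))) :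
    Finset (Equiv.Perm (Fin m)) := by
  classical exact Finset.univ.filter (Compatible m L)

/-- The barycenter `b(U_1 | ⋯ | U_p)` of the face `F(U_1 | ⋯ | U_p)`: the average of
the vertices `(σ(1), …, σ(m))` over all compatible permutations `σ`. -/
noncomputable def barycenter (m : ℕ) (L : List (Finset (Fin m))) : Fin m → ℝ :=
  ((compatPerms m L).card : ℝ)⁻¹ • ∑ σ ∈ compatPerms m L, permVertex m σ


/-!
Swapping two points of one block permutes the permutations compatible with an ordered partition,
so the barycenter is constant on each block; hence barycenters of partitions with `I` inside a
block lie in `D_I`, and they lie in the permutohedron as averages of vertices.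

Conversely, every point of the permutohedron has coordinate sum `m(m+1)/2`, so a point of
`D_I ∩ Perm` is determined by its coordinates outside `I`. Agreeing outside `I` with a point of the
hull of the barycenters is a convex condition, so it suffices to check it at a vertex `v_σ`. The
witness is the average, over `a ∈ I`, of the barycenters of the partitions that list the points in
`σ`-order as singletons but merge `I` into a single block at the place of `a`. Outside `I` such a
barycenter has coordinate `#{x ∉ I | σ x < σ i} + 1`, plus `|I|` when `σ a < σ i`; averaging over
`a` turns that last term into `#{a ∈ I | σ a < σ i}`, which restores `σ i + 1`.
-/

open Finset

section TupleSort

variable {α : Type*} [LinearOrder α] {m : ℕ}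

theorem Tuple.card_filter_lt_le_sort_symm (f : Fin m → α) (i : Fin m) :
    #{i' | f i' < f i} ≤ (Tuple.sort f).symm i := by
  rw [← Fin.card_Iio]
  refine card_le_card_of_injOn (Tuple.sort f).symm (fun i' hi' => ?_)
    (Tuple.sort f).symm.injective.injOn
  simp only [coe_filter, mem_univ, true_and, Set.mem_ofPred_eq, coe_Iio, Set.mem_Iio] at hi' ⊢
  by_contra h
  have := Tuple.monotone_sort f (not_lt.1 h)
  simp only [Function.comp_apply, Equiv.apply_symm_apply] at this
  exact absurd hi' (not_lt.2 this)

theorem Tuple.sort_symm_lt_card_filter_le (f : Fin m → α) (i : Fin m) :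
    ((Tuple.sort f).symm i : ℕ) < #{i' | f i' ≤ f i} := by
  rw [Nat.lt_iff_add_one_le, ← Fin.card_Iic]
  refine card_le_card_of_injOn (Tuple.sort f) (fun v hv => ?_) (Tuple.sort f).injective.injOn
  simp only [coe_Iic, Set.mem_Iic, coe_filter, mem_univ, true_and, Set.mem_ofPred_eq] at hv ⊢
  simpa using Tuple.monotone_sort f hv

end TupleSort

theorem List.sum_map_filterMap {α β M : Type*} [AddCommMonoid M] (g : α → Option β) (f : β → M)
    (l : List α) : ((l.filterMap g).map f).sum = (l.map fun x => ((g x).map f).getD 0).sum := by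
  induction l with
  | nil => simp
  | cons x l ih => cases h : g x <;> simp [h, ih]

theorem List.mem_take_finRange {m v : ℕ} {x : Fin m} :
    x ∈ (List.finRange m).take v ↔ (x : ℕ) < v := by
  simp [List.mem_take_iff_getElem, Fin.ext_iff]

theorem List.mem_foldr_union_iff {α : Type*} [DecidableEq α] (L : List (Finset α)) (x : α) :
    x ∈ L.foldr (· ∪ ·) ∅ ↔ ∃ U ∈ L, x ∈ U := by
  induction L with
  | nil => simp
  | cons U T ih => simp [ih]

variable {m : ℕ} {L : List (Finset (Fin m))}

theorem partialCard_succ {j : ℕ} (hj : j < L.length) :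
    partialCard m L (j + 1) = partialCard m L j + (L.get ⟨j, hj⟩).card := by
  rw [partialCard, partialCard, List.take_add_one, List.getElem?_eq_getElem hj, List.map_append,
    List.sum_append]
  simp

theorem mem_compatPerms {σ : Equiv.Perm (Fin m)} : σ ∈ compatPerms m L ↔ Compatible m L σ := by
  simp [compatPerms]

theorem partialCard_eq_card_filter {blk : Fin m → Fin L.length}
    (hblk : ∀ i j, i ∈ L.get j ↔ blk i = j) {j : ℕ} (hj : j ≤ L.length) :
    partialCard m L j = #{i | (blk i : ℕ) < j} := by
  induction j with
  | zero => simp [partialCard]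
  | succ j ih =>
    have hblock : L.get ⟨j, hj⟩ = ({i | (blk i : ℕ) = j} : Finset (Fin m)) := by
      ext i; rw [hblk]; simp [Fin.ext_iff]
    rw [partialCard_succ hj, ih (by omega), hblock, ← card_union_of_disjoint]
    · congr 1; ext i; simp; omega
    · exact disjoint_filter.2 fun i _ h => by omega

namespace IsOrderedPartition

theorem eq_of_mem_get (hL : IsOrderedPartition m L) {i : Fin m} {j j' : Fin L.length}
    (h : i ∈ L.get j) (h' : i ∈ L.get j') : j = j' := by
  by_contra hne
  have hdisj := List.pairwise_iff_get.1 hL.2.1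
  rcases lt_or_gt_of_ne hne with hlt | hlt
  · exact disjoint_left.1 (hdisj j j' hlt) h h'
  · exact disjoint_left.1 (hdisj j' j hlt) h' h

theorem exists_mem_get (hL : IsOrderedPartition m L) (i : Fin m) :
    ∃ j : Fin L.length, i ∈ L.get j := by
  have : i ∈ L.foldr (· ∪ ·) ∅ := hL.2.2 ▸ mem_univ i
  obtain ⟨U, hU, hiU⟩ := (List.mem_foldr_union_iff L i).1 this
  obtain ⟨j, rfl⟩ := List.mem_iff_get.1 hU
  exact ⟨j, hiU⟩

theorem exists_compatible (hL : IsOrderedPartition m L) : ∃ σ, Compatible m L σ := by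
  choose blk hblk using hL.exists_mem_get
  have mem_iff : ∀ i j, i ∈ L.get j ↔ blk i = j :=
    fun i j => ⟨fun h => hL.eq_of_mem_get (hblk i) h, fun h => h ▸ hblk i⟩
  have pc_eq := fun j (hj : j ≤ L.length) => partialCard_eq_card_filter mem_iff hj
  refine ⟨(Tuple.sort blk).symm, fun j i => ?_⟩
  have lower := Tuple.card_filter_lt_le_sort_symm blk i
  have upper := Tuple.sort_symm_lt_card_filter_le blk i
  have card_mono : ∀ {a b : ℕ}, a ≤ b → #{i' | (blk i' : ℕ) < a} ≤ #{i' | (blk i' : ℕ) < b} :=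
    fun hab => card_le_card fun x hx => by simp at hx ⊢; omega
  simp only [Fin.lt_def] at lower
  simp only [Fin.le_def, Nat.le_iff_lt_add_one] at upper
  rw [pc_eq j j.2.le, pc_eq (j + 1) j.2, mem_iff]
  constructor
  · rintro rfl; exact ⟨lower, upper⟩
  · rintro ⟨h₁, h₂⟩
    by_contra hne
    rcases lt_or_gt_of_ne hne with hlt | hlt
    · have := card_mono (show (blk i : ℕ) + 1 ≤ j by omega); omega
    · have := card_mono (show (j : ℕ) + 1 ≤ blk i by omega); omega

theorem compatPerms_nonempty (hL : IsOrderedPartition m L) : (compatPerms m L).Nonempty :=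
  let ⟨σ, hσ⟩ := hL.exists_compatible
  ⟨σ, mem_compatPerms.2 hσ⟩


theorem compatible_mul_swap_iff (hL : IsOrderedPartition m L)
    {j : Fin L.length} {i i' : Fin m} (hi : i ∈ L.get j) (hi' : i' ∈ L.get j)
    (σ : Equiv.Perm (Fin m)) :
    Compatible m L (σ * Equiv.swap i i') ↔ Compatible m L σ := by
  have hswap : ∀ j' x, Equiv.swap i i' x ∈ L.get j' ↔ x ∈ L.get j' := by
    intro j' x
    have : i ∈ L.get j' ↔ i' ∈ L.get j' := by
      constructor <;> intro h
      · exact hL.eq_of_mem_get hi h ▸ hi'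
      · exact hL.eq_of_mem_get hi' h ▸ hi
    rw [Equiv.swap_apply_def]
    split_ifs with h₁ h₂
    · rw [h₁, this]
    · rw [h₂, this]
    · rfl
  refine ⟨fun h j' x => ?_, fun h j' x => ?_⟩
  · have := h j' (Equiv.swap i i' x)
    rwa [hswap, Equiv.Perm.mul_apply, Equiv.swap_apply_self] at this
  · rw [Equiv.Perm.mul_apply, ← hswap]
    exact h j' _

theorem barycenter_apply_eq (hL : IsOrderedPartition m L)
    {j : Fin L.length} {i i' : Fin m} (hi : i ∈ L.get j) (hi' : i' ∈ L.get j) :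
    barycenter m L i = barycenter m L i' := by
  simp only [barycenter, Pi.smul_apply, Finset.sum_apply]
  congr 1
  refine sum_equiv (Equiv.mulRight (Equiv.swap i i')) (fun σ => ?_) (fun σ _ => ?_)
  · simp [mem_compatPerms, hL.compatible_mul_swap_iff hi hi']
  · simp [permVertex]
theorem barycenter_mem_permutohedron (hL : IsOrderedPartition m L) :
    barycenter m L ∈ permutohedron m := by
  have hC : (0 : ℝ) < (compatPerms m L).card := by exact_mod_cast hL.compatPerms_nonempty.card_pos
  rw [barycenter, smul_sum]
  refine (convex_convexHull ℝ _).sum_mem (fun _ _ => by positivity) ?_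
    fun σ _ => subset_convexHull ℝ _ ⟨σ, rfl⟩
  rw [sum_const, nsmul_eq_mul, mul_inv_cancel₀ hC.ne']

end IsOrderedPartition

theorem barycenter_apply_of_append_singleton {L₁ L₂ : List (Finset (Fin m))} {i : Fin m}
    (hL : IsOrderedPartition m (L₁ ++ {i} :: L₂)) :
    barycenter m (L₁ ++ {i} :: L₂) i = (L₁.map Finset.card).sum + 1 := by
  set L := L₁ ++ {i} :: L₂
  have hj : L₁.length < L.length := by simp [L]
  have hget : L.get ⟨L₁.length, hj⟩ = {i} := by simp [L]
  have hpc : partialCard m L L₁.length = (L₁.map Finset.card).sum := by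
    simp [partialCard, L, List.take_left']
  have hpc' : partialCard m L (L₁.length + 1) = (L₁.map Finset.card).sum + 1 := by
    rw [partialCard_succ hj, hget, hpc, card_singleton]
  have hval : ∀ σ ∈ compatPerms m L, permVertex m σ i = (L₁.map Finset.card).sum + 1 := by
    intro σ hσ
    have := (mem_compatPerms.1 hσ ⟨_, hj⟩ i).1 (hget ▸ mem_singleton_self i)
    simp only [hpc, hpc'] at this
    simp only [permVertex]
    norm_cast
    omega
  have hC : ((compatPerms m L).card : ℝ) ≠ 0 := by
    exact_mod_cast hL.compatPerms_nonempty.card_pos.ne'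
  simp only [barycenter, Pi.smul_apply, Finset.sum_apply, sum_congr rfl hval, sum_const,
    nsmul_eq_mul, smul_eq_mul]
  field_simp

theorem convex_diagSubspace (I : Finset (Fin m)) : Convex ℝ (diagSubspace m I) := by
  intro x hx y hy a b _ _ _ i hi i' hi'
  simp [hx i hi i' hi', hy i hi i' hi']

def partitionBarycenters (m : ℕ) (I : Finset (Fin m)) : Set (Fin m → ℝ) :=
  {b | ∃ L : List (Finset (Fin m)), IsOrderedPartition m L ∧ (∃ j : Fin L.length, I ⊆ L.get j) ∧
    b = barycenter m L}

theorem partitionBarycenters_anti {I J : Finset (Fin m)} (h : I ⊆ J) :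
    partitionBarycenters m J ⊆ partitionBarycenters m I := by
  rintro _ ⟨L, hL, ⟨j, hJ⟩, rfl⟩
  exact ⟨L, hL, ⟨j, h.trans hJ⟩, rfl⟩

theorem convexHull_partitionBarycenters_subset (I : Finset (Fin m)) :
    convexHull ℝ (partitionBarycenters m I) ⊆ diagSubspace m I ∩ permutohedron m := by
  refine convexHull_min ?_ ((convex_diagSubspace I).inter (convex_convexHull ℝ _))
  rintro _ ⟨L, hL, ⟨j, hI⟩, rfl⟩
  exact ⟨fun i hi i' hi' => hL.barycenter_apply_eq (hI hi) (hI hi'),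
    hL.barycenter_mem_permutohedron⟩

theorem sum_eq_of_mem_permutohedron {x : Fin m → ℝ} (hx : x ∈ permutohedron m) :
    ∑ i, x i = ∑ i : Fin m, (((i : ℕ) : ℝ) + 1) := by
  refine convexHull_min ?_ (convex_hyperplane (f := fun x : Fin m → ℝ => ∑ i, x i)
    ⟨fun x y => sum_add_distrib, fun c x => (mul_sum _ _ _).symm⟩ _) hx
  rintro _ ⟨σ, rfl⟩
  exact Equiv.sum_comp σ fun i => ((i : ℕ) : ℝ) + 1

theorem eq_of_mem_diagSubspace {I : Finset (Fin m)} (hI : I.Nonempty) {x y : Fin m → ℝ}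
    (hx : x ∈ diagSubspace m I) (hy : y ∈ diagSubspace m I) (hxy : ∀ i ∉ I, x i = y i)
    (hsum : ∑ i, x i = ∑ i, y i) : x = y := by
  obtain ⟨a, ha⟩ := hI
  have hsplit : ∀ z ∈ diagSubspace m I, ∑ i, z i = #I * z a + ∑ i ∈ Iᶜ, z i := by
    intro z hz
    rw [← sum_add_sum_compl I, sum_congr rfl fun i hi => hz i hi a ha, sum_const, nsmul_eq_mul]
  have hcompl : ∑ i ∈ Iᶜ, x i = ∑ i ∈ Iᶜ, y i :=
    sum_congr rfl fun i hi => hxy i (mem_compl.1 hi)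
  have hxa : x a = y a := by
    have hk : (#I : ℝ) ≠ 0 := by exact_mod_cast (card_pos.2 ⟨a, ha⟩).ne'
    rw [hsplit x hx, hsplit y hy, hcompl, add_left_inj] at hsum
    exact mul_left_cancel₀ hk hsum
  funext i
  by_cases hi : i ∈ I
  · rw [hx i hi a ha, hy i hi a ha, hxa]
  · exact hxy i hi

theorem card_filter_apply_lt (σ : Equiv.Perm (Fin m)) (v : Fin m) : #{x | σ x < v} = v := by
  rw [← Fin.card_Iio v]
  exact card_equiv σ (by simp)

def mergeBlock {α : Type*} [DecidableEq α] (I : Finset α) (a x : α) : Option (Finset α) :=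
  if x ∈ I then (if x = a then some I else none) else some {x}

/-- The points listed in increasing order of `σ`, each as a singleton block, except that the
points of `I` are merged into one block placed where `a` stands. -/
def mergedPartition (I : Finset (Fin m)) (σ : Equiv.Perm (Fin m)) (a : Fin m) :
    List (Finset (Fin m)) :=
  ((List.finRange m).map σ.symm).filterMap (mergeBlock I a)

section mergedPartition

variable {I : Finset (Fin m)} (σ : Equiv.Perm (Fin m)) {a : Fin m}

theorem mem_mergedPartition {U : Finset (Fin m)} :
    U ∈ mergedPartition I σ a ↔ ∃ x, mergeBlock I a x = some U := by
  simp only [mergedPartition, List.mem_filterMap, List.mem_map, List.mem_finRange, true_and]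
  exact ⟨fun ⟨_, ⟨v, rfl⟩, h⟩ => ⟨_, h⟩, fun ⟨x, h⟩ => ⟨x, ⟨σ x, by simp⟩, h⟩⟩

theorem isOrderedPartition_mergedPartition (ha : a ∈ I) :
    IsOrderedPartition m (mergedPartition I σ a) := by
  refine ⟨fun U hU => ?_, ?_, eq_univ_of_forall fun x => (List.mem_foldr_union_iff _ x).2 ?_⟩
  · obtain ⟨x, hx⟩ := (mem_mergedPartition σ).1 hU
    unfold mergeBlock at hx
    split_ifs at hx <;> cases hx
    exacts [⟨a, ha⟩, singleton_nonempty x]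
  · rw [mergedPartition, List.pairwise_filterMap]
    refine ((List.nodup_finRange m).map σ.symm.injective).imp fun {x y} hxy U hU V hV => ?_
    unfold mergeBlock at hU hV
    split_ifs at hU hV <;> cases hU <;> cases hV <;> simp_all
  · by_cases hx : x ∈ I
    · exact ⟨I, (mem_mergedPartition σ).2 ⟨a, by simp [mergeBlock, ha]⟩, hx⟩
    · exact ⟨{x}, (mem_mergedPartition σ).2 ⟨x, by simp [mergeBlock, hx]⟩, mem_singleton_self x⟩

theorem barycenter_mergedPartition_mem (ha : a ∈ I) :
    barycenter m (mergedPartition I σ a) ∈ partitionBarycenters m I := by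
  obtain ⟨j, hj⟩ := List.mem_iff_get.1
    ((mem_mergedPartition (I := I) (a := a) (U := I) σ).2 ⟨a, by simp [mergeBlock, ha]⟩)
  exact ⟨_, isOrderedPartition_mergedPartition σ ha, ⟨j, hj.ge⟩, rfl⟩

theorem barycenter_mergedPartition_apply (ha : a ∈ I) {i : Fin m} (hi : i ∉ I) :
    barycenter m (mergedPartition I σ a) i =
      #{x | x ∉ I ∧ σ x < σ i} + (if σ a < σ i then (#I : ℝ) else 0) + 1 := by
  set l := (List.finRange m).map σ.symm
  have hget : l[(σ i : ℕ)]'(by simp [l]) = i := by simp [l]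
  have hl : l = l.take (σ i) ++ i :: l.drop (σ i + 1) := by
    conv_lhs => rw [← List.take_append_drop (σ i) l]
    rw [List.drop_eq_getElem_cons (by simp [l]), hget]
  have hsplit : mergedPartition I σ a =
      (l.take (σ i)).filterMap (mergeBlock I a) ++
        {i} :: (l.drop (σ i + 1)).filterMap (mergeBlock I a) := by
    have := congrArg (List.filterMap (mergeBlock I a)) hl
    rwa [List.filterMap_append, List.filterMap_cons, mergeBlock, if_neg hi] at this
  have hnodup : (l.take (σ i)).Nodup :=
    ((List.nodup_finRange m).map σ.symm.injective).sublist (List.take_sublist _ _)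
  have htake : (l.take (σ i)).toFinset = ({x | σ x < σ i} : Finset (Fin m)) := by
    ext x
    simp only [l, ← List.map_take, List.mem_toFinset, List.mem_map, mem_filter, mem_univ, true_and]
    exact ⟨fun ⟨v, hv, hvx⟩ => by subst hvx; simpa using List.mem_take_finRange.1 hv,
      fun h => ⟨σ x, List.mem_take_finRange.2 h, by simp⟩⟩
  have hF : ∀ x, ((mergeBlock I a x).map Finset.card).getD 0 =
      if x ∈ I then (if x = a then #I else 0) else 1 := by
    intro x; unfold mergeBlock; split_ifs <;> rfl
  rw [hsplit,
    barycenter_apply_of_append_singleton (hsplit ▸ isOrderedPartition_mergedPartition σ ha),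
    List.sum_map_filterMap, ← List.sum_toFinset _ hnodup, htake]
  simp only [hF]
  rw [sum_ite, sum_ite_eq', filter_filter, sum_const, smul_eq_mul, mul_one, filter_filter]
  simp only [mem_filter, mem_univ, true_and, ha, and_comm (a := σ _ < σ i)]
  split_ifs <;> push_cast <;> ring

end mergedPartition

theorem exists_mem_convexHull_partitionBarycenters_eq_permVertex_of_notMem {I : Finset (Fin m)}
    (hI : I.Nonempty) (σ : Equiv.Perm (Fin m)) :
    ∃ q ∈ convexHull ℝ (partitionBarycenters m I), ∀ i ∉ I, q i = permVertex m σ i := by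
  refine ⟨I.centerMass (fun _ => 1) fun a => barycenter m (mergedPartition I σ a),
    I.centerMass_mem_convexHull (fun _ _ => zero_le_one) (by simpa using hI)
      fun a ha => barycenter_mergedPartition_mem σ ha, fun i hi => ?_⟩
  have hk : (#I : ℝ) ≠ 0 := by exact_mod_cast hI.card_pos.ne'
  have hcount : #{x | x ∉ I ∧ σ x < σ i} + #{a ∈ I | σ a < σ i} = (σ i : ℕ) := by
    rw [← card_filter_apply_lt σ (σ i),
      ← card_filter_add_card_filter_not (s := ({x | σ x < σ i} : Finset _)) (p := (· ∉ I))]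
    congr 2 <;> ext x <;> simp [and_comm]
  simp only [centerMass, Finset.sum_apply, Pi.smul_apply, one_smul, smul_eq_mul, sum_const,
    nsmul_eq_mul, mul_one]
  rw [sum_congr rfl fun a ha => barycenter_mergedPartition_apply σ ha hi, sum_add_distrib,
    sum_add_distrib, sum_ite, sum_const_zero, sum_const, sum_const, sum_const, nsmul_eq_mul,
    nsmul_eq_mul, nsmul_eq_mul, permVertex, ← hcount]
  push_cast
  field_simp
  ring

theorem diagSubspace_inter_permutohedron_subset {I : Finset (Fin m)} (hI : I.Nonempty) :
    diagSubspace m I ∩ permutohedron m ⊆ convexHull ℝ (partitionBarycenters m I) := by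
  rintro x ⟨hxD, hxP⟩
  set T := {y : Fin m → ℝ | ∃ q ∈ convexHull ℝ (partitionBarycenters m I), ∀ i ∉ I, q i = y i}
  have hT : Convex ℝ T := by
    rintro y ⟨q, hq, hqy⟩ z ⟨r, hr, hrz⟩ a b ha hb hab
    exact ⟨a • q + b • r, convex_convexHull ℝ _ hq hr ha hb hab, fun i hi => by
      simp [hqy i hi, hrz i hi]⟩
  have hvert : {v | ∃ σ, v = permVertex m σ} ⊆ T := by
    rintro _ ⟨σ, rfl⟩
    exact exists_mem_convexHull_partitionBarycenters_eq_permVertex_of_notMem hI σ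
  obtain ⟨q, hq, hqx⟩ : x ∈ T := convexHull_min hvert hT hxP
  obtain ⟨hqD, hqP⟩ := convexHull_partitionBarycenters_subset I hq
  rwa [eq_of_mem_diagSubspace hI hxD hqD (fun i hi => (hqx i hi).symm)
    ((sum_eq_of_mem_permutohedron hxP).trans (sum_eq_of_mem_permutohedron hqP).symm)]

theorem stmt9 (m : ℕ) (hm : 1 ≤ m) (I : Finset (Fin m)) :
    diagSubspace m I ∩ permutohedron m =
      convexHull ℝ {b : Fin m → ℝ | ∃ L : List (Finset (Fin m)),
        IsOrderedPartition m L ∧ (∃ j : Fin L.length, I ⊆ L.get j) ∧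
        b = barycenter m L} := by
  refine subset_antisymm ?_ (convexHull_partitionBarycenters_subset I)
  rcases I.eq_empty_or_nonempty with rfl | hI
  · have i₀ : Fin m := ⟨0, hm⟩
    have hdiag : diagSubspace m ∅ = diagSubspace m {i₀} := by
      ext x; simp [diagSubspace]
    rw [hdiag]
    exact (diagSubspace_inter_permutohedron_subset (singleton_nonempty i₀)).trans
      (convexHull_mono (partitionBarycenters_anti (empty_subset _)))
  · exact diagSubspace_inter_permutohedron_subset hI
end
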